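/- arXiv:2507.23199 — 4 statements merged into one kernel-verified Lean document; each statement's English description precedes it below -/
import Mathlib

section
/- There exists a constant β ∈ ℝ (depending only on J and F) such that for any two solutions u, v : [0,∞) → ℝ^J of the Lorenz 96 equation with ‖u(0)‖ ≤ ρ and v(0) ∈ ℝ^J arbitrary, one has ‖u(t) − v(t)‖² ≤ ‖u(0) − v(0)‖²·e^{2βt} for all t ≥ 0, where ρ = √(2J)·|F|. -/
/-!
The quadratic part of the Lorenz 96 field conserves energy: for every `w`,
`∑ⱼ (w_{j+1} - w_{j-2}) w_{j-1} w_j = 0` (the sum of the first products equals that of the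
second after the shift `j ↦ j + 1`). Consequently `d/dt ‖u‖² ≤ J F² - ‖u‖²`, so every ball of
radius `ρ` with `J F² ≤ ρ²` is forward invariant. For the difference `w = u - v` the quadratic
term of `w` cancels in the same way, and the remaining terms, bilinear in `u` and `w`, give
`d/dt ‖w‖² ≤ 8 ‖u‖ ‖w‖² ≤ 8 ρ ‖w‖²`. Grönwall's inequality yields the claim with `β = 4ρ`.
-/

open scoped InnerProductSpace
open Real Finset

/-- The Lorenz 96 vector field on `ℝ^J` with external forcing `F`,
with coordinates indexed cyclically modulo `J`. -/
noncomputable def lorenz96 (J : ℕ) [NeZero J] (F : ℝ)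
    (u : EuclideanSpace ℝ (Fin J)) : EuclideanSpace ℝ (Fin J) :=
  WithLp.toLp 2 fun j => (u (j + 1) - u (j - 2)) * u (j - 1) - u j + F

theorem le_mul_exp_of_hasDerivAt_le_mul {f f' : ℝ → ℝ} {K : ℝ}
    (hf : ∀ t, 0 ≤ t → HasDerivAt f (f' t) t) (bound : ∀ t, 0 ≤ t → f' t ≤ K * f t)
    {t : ℝ} (ht : 0 ≤ t) : f t ≤ f 0 * exp (K * t) := by
  have h := le_gronwallBound_of_liminf_deriv_right_le (f := f) (f' := f') (δ := f 0) (K := K)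
    (ε := 0) (a := 0) (b := t)
    (fun s hs => (hf s hs.1).continuousAt.continuousWithinAt)
    (fun s hs _ hr => (hf s hs.1).hasDerivWithinAt.liminf_right_slope_le hr) le_rfl
    (fun s hs => by simpa using bound s hs.1) t ⟨ht, le_rfl⟩
  rwa [gronwallBound_ε0, sub_zero] at h

theorem mul_mul_le_mul_add_sq_div_two {a M : ℝ} (ha : |a| ≤ M) (x y : ℝ) :
    a * (x * y) ≤ M * ((x ^ 2 + y ^ 2) / 2) :=
  calc a * (x * y) ≤ |a| * |x * y| := by rw [← abs_mul]; exact le_abs_self _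
    _ ≤ |a| * ((x ^ 2 + y ^ 2) / 2) := by
        gcongr
        rw [abs_mul]
        nlinarith [sq_abs x, sq_abs y, sq_nonneg (|x| - |y|)]
    _ ≤ M * ((x ^ 2 + y ^ 2) / 2) := by gcongr

section Lorenz96

variable {J : ℕ} [NeZero J]

theorem sum_mul_shift_mul_le {a : Fin J → ℝ} {M : ℝ} (ha : ∀ j, |a j| ≤ M)
    (w : Fin J → ℝ) (c : Fin J) : ∑ j, a j * (w (j + c) * w j) ≤ M * ∑ j, w j ^ 2 :=
  calc ∑ j, a j * (w (j + c) * w j) ≤ ∑ j, M * ((w (j + c) ^ 2 + w j ^ 2) / 2) :=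
        sum_le_sum fun j _ => mul_mul_le_mul_add_sq_div_two (ha j) _ _
    _ = M * ∑ j, w j ^ 2 := by
        have hshift : ∑ j, w (j + c) ^ 2 = ∑ j, w j ^ 2 :=
          Equiv.sum_comp (Equiv.addRight c) (fun j => w j ^ 2)
        rw [← mul_sum, ← sum_div, sum_add_distrib, hshift]
        ring

theorem sum_lorenz96_nonlinearity_mul_eq_zero (w : Fin J → ℝ) :
    ∑ j, (w (j + 1) - w (j - 2)) * w (j - 1) * w j = 0 := by
  have hshift : ∑ j, w (j + 1) * w (j - 1) * w j = ∑ j, w j * w (j - 2) * w (j - 1) := by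
    refine Fintype.sum_equiv (Equiv.addRight 1) _ _ fun j => ?_
    have h : j + 1 - 2 = j - 1 := by open Fin.CommRing in ring
    rw [Equiv.coe_addRight, h, add_sub_cancel_right]
  rw [← sub_eq_zero.mpr hshift, ← sum_sub_distrib]
  exact sum_congr rfl fun j _ => by ring

theorem two_mul_inner_lorenz96_self_add_norm_sq_le (F : ℝ) (u : EuclideanSpace ℝ (Fin J)) :
    2 * ⟪u, lorenz96 J F u⟫_ℝ + ‖u‖ ^ 2 ≤ J * F ^ 2 := by
  have hinner : ⟪u, lorenz96 J F u⟫_ℝ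
      = ∑ j, (u (j + 1) - u (j - 2)) * u (j - 1) * u j + ∑ j, (F * u j - u j ^ 2) := by
    simp only [PiLp.inner_apply, RCLike.inner_apply, conj_trivial, lorenz96, ← sum_add_distrib]
    exact sum_congr rfl fun j _ => by ring
  rw [hinner, sum_lorenz96_nonlinearity_mul_eq_zero, zero_add, EuclideanSpace.real_norm_sq_eq,
    mul_sum, ← sum_add_distrib]
  calc ∑ j, (2 * (F * u j - u j ^ 2) + u j ^ 2) ≤ ∑ _j : Fin J, F ^ 2 :=
        sum_le_sum fun j _ => by nlinarith [sq_nonneg (F - u j)]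
    _ = J * F ^ 2 := by simp

theorem inner_sub_lorenz96_sub_le (F : ℝ) (u v : EuclideanSpace ℝ (Fin J)) :
    ⟪u - v, lorenz96 J F u - lorenz96 J F v⟫_ℝ ≤ 4 * ‖u‖ * ‖u - v‖ ^ 2 := by
  set w : Fin J → ℝ := fun j => u j - v j
  have hw : ‖u - v‖ ^ 2 = ∑ j, w j ^ 2 := EuclideanSpace.real_norm_sq_eq _
  have hu (i : Fin J) : |u i| ≤ ‖u‖ := PiLp.norm_apply_le u i
  have hnu (i : Fin J) : |-u i| ≤ ‖u‖ := (abs_neg _).trans_le (hu i)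
  have hinner : ⟪u - v, lorenz96 J F u - lorenz96 J F v⟫_ℝ
      = ∑ j, u (j + 1) * (w (j + -1) * w j) + ∑ j, -u (j - 2) * (w (j + -1) * w j)
        + ∑ j, u (j - 1) * (w (j + 1) * w j) + ∑ j, -u (j - 1) * (w (j + -2) * w j)
        - ∑ j, (w (j + 1) - w (j - 2)) * w (j - 1) * w j - ∑ j, w j ^ 2 := by
    simp only [PiLp.inner_apply, RCLike.inner_apply, conj_trivial, lorenz96, PiLp.sub_apply,
      ← sum_add_distrib, ← sum_sub_distrib, ← sub_eq_add_neg, w]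
    exact sum_congr rfl fun j _ => by ring
  rw [hinner, sum_lorenz96_nonlinearity_mul_eq_zero, hw]
  have h₁ := sum_mul_shift_mul_le (fun j => hu (j + 1)) w (-1)
  have h₂ := sum_mul_shift_mul_le (fun j => hnu (j - 2)) w (-1)
  have h₃ := sum_mul_shift_mul_le (fun j => hu (j - 1)) w 1
  have h₄ := sum_mul_shift_mul_le (fun j => hnu (j - 1)) w (-2)
  linarith [sum_nonneg fun j (_ : j ∈ univ) => sq_nonneg (w j)]

theorem norm_le_of_hasDerivAt_lorenz96 {F ρ : ℝ} (hρ : J * F ^ 2 ≤ ρ ^ 2)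
    {u : ℝ → EuclideanSpace ℝ (Fin J)}
    (hu : ∀ t, 0 ≤ t → HasDerivAt u (lorenz96 J F (u t)) t) (h0 : ‖u 0‖ ≤ ρ)
    {t : ℝ} (ht : 0 ≤ t) : ‖u t‖ ≤ ρ := by
  have hρ0 : 0 ≤ ρ := (norm_nonneg _).trans h0
  have hdecay : ‖u t‖ ^ 2 - ρ ^ 2 ≤ (‖u 0‖ ^ 2 - ρ ^ 2) * exp (-1 * t) :=
    le_mul_exp_of_hasDerivAt_le_mul (f := fun s => ‖u s‖ ^ 2 - ρ ^ 2)
      (fun s hs => (hu s hs).norm_sq.sub_const _)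
      (fun s hs => by linarith [two_mul_inner_lorenz96_self_add_norm_sq_le F (u s)]) ht
  have hinit : ‖u 0‖ ^ 2 - ρ ^ 2 ≤ 0 := sub_nonpos.mpr (pow_le_pow_left₀ (norm_nonneg _) h0 2)
  have hsq : ‖u t‖ ^ 2 ≤ ρ ^ 2 := by
    linarith [mul_nonpos_of_nonpos_of_nonneg hinit (exp_pos (-1 * t)).le]
  exact (pow_le_pow_iff_left₀ (norm_nonneg _) hρ0 two_ne_zero).mp hsq

end Lorenz96

theorem lorenz96_exponential_divergence_general (J : ℕ) [NeZero J] (F : ℝ) :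
    ∃ β : ℝ, ∀ (u v : ℝ → EuclideanSpace ℝ (Fin J)),
      (∀ t : ℝ, 0 ≤ t → HasDerivAt u (lorenz96 J F (u t)) t) →
      (∀ t : ℝ, 0 ≤ t → HasDerivAt v (lorenz96 J F (v t)) t) →
      ‖u 0‖ ≤ Real.sqrt (2 * J) * |F| →
      ∀ t : ℝ, 0 ≤ t →
        ‖u t - v t‖ ^ 2 ≤ ‖u 0 - v 0‖ ^ 2 * Real.exp (2 * β * t) := by
  set ρ := √(2 * J) * |F|
  have hρ : J * F ^ 2 ≤ ρ ^ 2 := by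
    rw [mul_pow, sq_sqrt (by positivity), sq_abs]
    nlinarith [sq_nonneg F, (Nat.cast_nonneg J : (0 : ℝ) ≤ J)]
  refine ⟨4 * ρ, fun u v hu hv h0 t ht => ?_⟩
  refine le_mul_exp_of_hasDerivAt_le_mul (f := fun s => ‖u s - v s‖ ^ 2)
    (fun s hs => ((hu s hs).sub (hv s hs)).norm_sq) (fun s hs => ?_) ht
  have hus : ‖u s‖ ≤ ρ := norm_le_of_hasDerivAt_lorenz96 hρ hu h0 hs
  calc 2 * ⟪u s - v s, lorenz96 J F (u s) - lorenz96 J F (v s)⟫_ℝ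
      ≤ 2 * (4 * ‖u s‖ * ‖u s - v s‖ ^ 2) :=
        mul_le_mul_of_nonneg_left (inner_sub_lorenz96_sub_le F _ _) zero_le_two
    _ ≤ 2 * (4 * ρ * ‖u s - v s‖ ^ 2) := by gcongr
    _ = 2 * (4 * ρ) * ‖u s - v s‖ ^ 2 := by ring

theorem lorenz96_exponential_divergence (J : ℕ) [NeZero J] (hJ : 4 ≤ J) (F : ℝ) :
    ∃ β : ℝ, ∀ (u v : ℝ → EuclideanSpace ℝ (Fin J)),
      (∀ t : ℝ, 0 ≤ t → HasDerivAt u (lorenz96 J F (u t)) t) →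
      (∀ t : ℝ, 0 ≤ t → HasDerivAt v (lorenz96 J F (v t)) t) →
      ‖u 0‖ ≤ Real.sqrt (2 * J) * |F| →
      ∀ t : ℝ, 0 ≤ t →
        ‖u t - v t‖ ^ 2 ≤ ‖u 0 - v 0‖ ^ 2 * Real.exp (2 * β * t) :=
  lorenz96_exponential_divergence_general J F
end

section
/- Let P be a symmetric positive semidefinite J×J real matrix, R a symmetric positive definite d×d real matrix, and H a d×J real matrix. Then the matrices HPHᵀ + R and I_J + PHᵀR⁻¹H are invertible, and PHᵀ(HPHᵀ + R)⁻¹ = (I_J + PHᵀR⁻¹H)⁻¹ PHᵀR⁻¹. Consequently, for any v ∈ ℝ^J and y ∈ ℝ^d, the vector v_a = v + PHᵀ(HPHᵀ + R)⁻¹(y − Hv) satisfies (I_J + PHᵀR⁻¹H)·v_a = v + PHᵀR⁻¹y. -/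
/-!
With `X = P Hᵀ`, `S = H X + R` and `M = 1 + X R⁻¹ H`, expanding both sides gives the
push-through identity `M X = X R⁻¹ S`, and Sylvester's determinant identity gives
`det M = det S · det R⁻¹`. Since `S` is positive definite, both `S` and `M` are invertible,
so `M (X S⁻¹) = X R⁻¹`; the gain formula and the analysis-update equation follow by
multiplying through by `M⁻¹` and by `M` respectively.
-/

open Matrix

namespace Matrix

variable {m n K : Type*} [Fintype m] [Fintype n] [DecidableEq m] [DecidableEq n] [CommRing K]
  {X : Matrix n m K} {H : Matrix m n K} {R : Matrix m m K}

theorem one_add_mul_inv_mul_mul (hR : IsUnit R.det) :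
    (1 + X * R⁻¹ * H) * X = X * R⁻¹ * (H * X + R) := by
  rw [Matrix.mul_add, nonsing_inv_mul_cancel_right _ _ hR, Matrix.add_mul, Matrix.one_mul,
    add_comm, Matrix.mul_assoc (X * R⁻¹)]

theorem det_one_add_mul_inv_mul (hR : IsUnit R.det) :
    (1 + X * R⁻¹ * H).det = R⁻¹.det * (H * X + R).det := by
  rw [Matrix.mul_assoc, det_one_add_mul_comm, ← det_mul, Matrix.mul_add,
    nonsing_inv_mul _ hR, Matrix.mul_assoc, add_comm]

theorem isUnit_det_one_add_mul_inv_mul (hR : IsUnit R.det) (hS : IsUnit (H * X + R).det) :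
    IsUnit (1 + X * R⁻¹ * H).det := by
  rw [det_one_add_mul_inv_mul hR]
  exact (isUnit_nonsing_inv_det _ hR).mul hS

theorem one_add_mul_inv_mul_mul_mul_inv (hR : IsUnit R.det) (hS : IsUnit (H * X + R).det) :
    (1 + X * R⁻¹ * H) * (X * (H * X + R)⁻¹) = X * R⁻¹ := by
  rw [← Matrix.mul_assoc, one_add_mul_inv_mul_mul hR, mul_nonsing_inv_cancel_right _ _ hS]

theorem mul_inv_eq_inv_one_add_mul_inv_mul_mul (hR : IsUnit R.det)
    (hS : IsUnit (H * X + R).det) :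
    X * (H * X + R)⁻¹ = (1 + X * R⁻¹ * H)⁻¹ * (X * R⁻¹) := by
  calc X * (H * X + R)⁻¹
      = (1 + X * R⁻¹ * H)⁻¹ * ((1 + X * R⁻¹ * H) * (X * (H * X + R)⁻¹)) :=
        (nonsing_inv_mul_cancel_left _ _ (isUnit_det_one_add_mul_inv_mul hR hS)).symm
    _ = (1 + X * R⁻¹ * H)⁻¹ * (X * R⁻¹) := by rw [one_add_mul_inv_mul_mul_mul_inv hR hS]

theorem one_add_mul_inv_mul_mulVec_update (hR : IsUnit R.det) (hS : IsUnit (H * X + R).det)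
    (v : n → K) (y : m → K) :
    (1 + X * R⁻¹ * H) *ᵥ (v + (X * (H * X + R)⁻¹) *ᵥ (y - H *ᵥ v)) = v + (X * R⁻¹) *ᵥ y := by
  rw [mulVec_add, mulVec_mulVec, one_add_mul_inv_mul_mul_mul_inv hR hS, add_mulVec, one_mulVec,
    mulVec_sub, mulVec_mulVec, Matrix.mul_assoc]
  abel

end Matrix

theorem kalman_gain_identity_general (J d : ℕ)
    (P : Matrix (Fin J) (Fin J) ℝ) (hP : P.PosSemidef)
    (R : Matrix (Fin d) (Fin d) ℝ) (hR : R.PosDef)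
    (H : Matrix (Fin d) (Fin J) ℝ) :
    IsUnit (H * P * Hᵀ + R) ∧
    IsUnit (1 + P * Hᵀ * R⁻¹ * H) ∧
    P * Hᵀ * (H * P * Hᵀ + R)⁻¹ = (1 + P * Hᵀ * R⁻¹ * H)⁻¹ * (P * Hᵀ * R⁻¹) ∧
    ∀ (v : Fin J → ℝ) (y : Fin d → ℝ),
      (1 + P * Hᵀ * R⁻¹ * H) *ᵥ
          (v + (P * Hᵀ * (H * P * Hᵀ + R)⁻¹) *ᵥ (y - H *ᵥ v))
        = v + (P * Hᵀ * R⁻¹) *ᵥ y := by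
  have hS : (H * P * Hᵀ + R).PosDef := by
    refine PosDef.posSemidef_add ?_ hR
    simpa using hP.mul_mul_conjTranspose_same H
  have hRdet : IsUnit R.det := (isUnit_iff_isUnit_det R).mp hR.isUnit
  have hSdet : IsUnit (H * P * Hᵀ + R).det := (isUnit_iff_isUnit_det _).mp hS.isUnit
  rw [Matrix.mul_assoc H] at hSdet ⊢
  exact ⟨(isUnit_iff_isUnit_det _).mpr hSdet,
    (isUnit_iff_isUnit_det _).mpr (isUnit_det_one_add_mul_inv_mul hRdet hSdet),
    mul_inv_eq_inv_one_add_mul_inv_mul_mul hRdet hSdet,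
    one_add_mul_inv_mul_mulVec_update hRdet hSdet⟩

theorem kalman_gain_identity (J d : ℕ) (hJ : 0 < J) (hd : 0 < d)
    (P : Matrix (Fin J) (Fin J) ℝ) (hP : P.PosSemidef)
    (R : Matrix (Fin d) (Fin d) ℝ) (hR : R.PosDef)
    (H : Matrix (Fin d) (Fin J) ℝ) :
    IsUnit (H * P * Hᵀ + R) ∧
    IsUnit (1 + P * Hᵀ * R⁻¹ * H) ∧
    P * Hᵀ * (H * P * Hᵀ + R)⁻¹ = (1 + P * Hᵀ * R⁻¹ * H)⁻¹ * (P * Hᵀ * R⁻¹) ∧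
    ∀ (v : Fin J → ℝ) (y : Fin d → ℝ),
      (1 + P * Hᵀ * R⁻¹ * H) *ᵥ
          (v + (P * Hᵀ * (H * P * Hᵀ + R)⁻¹) *ᵥ (y - H *ᵥ v))
        = v + (P * Hᵀ * R⁻¹) *ᵥ y :=
  kalman_gain_identity_general J d P hP R hR H
end

section
/- Let a > 0 and b ∈ ℝ with b² > 1 + 2a, and let A be the 2×2 real matrix with first row (a, 0) and second row (b, 0). Then the eigenvalues of A are exactly 0 and a (so A has nonnegative spectrum), I₂ + A is invertible, and the operator norm of (I₂ + A)⁻¹A (with respect to the Euclidean norm on ℝ²) equals √(a² + b²)/(1 + a), which is strictly greater than 1. -/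
/-!
`A = !![a, 0; b, 0]` is lower triangular with diagonal `a, 0`, and `A * A = a • A`. The latter makes
`1 - (1 + a)⁻¹ • A` the inverse of `1 + A`, whence `(1 + A)⁻¹ * A = (1 + a)⁻¹ • A`. Finally `A` is the
rank-one map `x ↦ x₀ • (a, b)`, whose operator norm is `‖(a, b)‖ = √(a² + b²)`, and this exceeds
`1 + a` exactly when `b² > 1 + 2a`.
-/

/-- The operator norm of a square real matrix, acting on `ℝ^J` with the
Euclidean norm. -/
noncomputable def matOpNorm {J : ℕ} (M : Matrix (Fin J) (Fin J) ℝ) : ℝ :=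
  ‖(LinearMap.toContinuousLinearMap (Matrix.toEuclideanLin M) :
      EuclideanSpace ℝ (Fin J) →L[ℝ] EuclideanSpace ℝ (Fin J))‖

theorem Matrix.spectrum_lowerTriangular_fin_two {K : Type*} [Field K] (a b d : K) :
    spectrum K !![a, 0; b, d] = {a, d} := by
  ext x
  have hdet : (algebraMap K _ x - !![a, 0; b, d]).det = (x - a) * (x - d) := by
    simp [Matrix.det_fin_two, Matrix.algebraMap_eq_diagonal]
  rw [spectrum.mem_iff, Matrix.isUnit_iff_isUnit_det, isUnit_iff_ne_zero, not_not, hdet,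
    mul_eq_zero, sub_eq_zero, sub_eq_zero, Set.mem_insert_iff, Set.mem_singleton_iff]

theorem Matrix.fin_two_col_mul_self {R : Type*} [CommRing R] (c d : R) :
    !![c, 0; d, 0] * !![c, 0; d, 0] = c • !![c, 0; d, 0] := by
  ext i j
  fin_cases i <;> fin_cases j <;> simp [Matrix.mul_apply, mul_comm]

theorem one_sub_smul_mul_one_add_of_mul_self_eq_smul {K A : Type*} [Field K] [Ring A]
    [Algebra K A] {M : A} {c : K} (hM : M * M = c • M) (hc : 1 + c ≠ 0) :
    (1 - (1 + c)⁻¹ • M) * (1 + M) = 1 := by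
  rw [sub_mul, one_mul, mul_add, mul_one, smul_mul_assoc, hM, smul_smul, ← add_smul,
    ← mul_one_add, inv_mul_cancel₀ hc, one_smul, add_sub_cancel_right]

theorem Matrix.inv_one_add_mul_of_mul_self_eq_smul {n K : Type*} [Fintype n] [DecidableEq n]
    [Field K] {M : Matrix n n K} {c : K} (hM : M * M = c • M) (hc : 1 + c ≠ 0) :
    (1 + M)⁻¹ * M = (1 + c)⁻¹ • M := by
  have hcoeff : 1 - (1 + c)⁻¹ * c = (1 + c)⁻¹ := by
    field_simp
    ring
  rw [Matrix.inv_eq_left_inv (one_sub_smul_mul_one_add_of_mul_self_eq_smul hM hc), sub_mul,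
    one_mul, smul_mul_assoc, hM, smul_smul]
  conv_rhs => rw [← hcoeff, sub_smul, one_smul]

theorem matOpNorm_smul {J : ℕ} (r : ℝ) (M : Matrix (Fin J) (Fin J) ℝ) :
    matOpNorm (r • M) = |r| * matOpNorm M := by
  simp [matOpNorm, norm_smul]

theorem matOpNorm_fin_two_col (c d : ℝ) :
    matOpNorm !![c, 0; d, 0] = √(c ^ 2 + d ^ 2) := by
  have hrankOne : (LinearMap.toContinuousLinearMap (Matrix.toEuclideanLin !![c, 0; d, 0]) :
      EuclideanSpace ℝ (Fin 2) →L[ℝ] EuclideanSpace ℝ (Fin 2)) =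
      (innerSL ℝ (EuclideanSpace.single 0 1)).smulRight !₂[c, d] := by
    ext x i
    fin_cases i <;>
      simp [Matrix.toLpLin_apply, Matrix.vecHead, EuclideanSpace.inner_single_left, mul_comm]
  rw [matOpNorm, hrankOne, ContinuousLinearMap.norm_smulRight_apply, innerSL_apply_norm,
    PiLp.norm_single, EuclideanSpace.norm_eq]
  simp

theorem counterexample_antisymmetric (a b : ℝ) (ha : 0 < a) (hb : 1 + 2 * a < b ^ 2) :
    spectrum ℝ (!![a, 0; b, 0]) = {0, a} ∧
    IsUnit (1 + !![a, 0; b, 0]) ∧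
    matOpNorm ((1 + !![a, 0; b, 0])⁻¹ * !![a, 0; b, 0])
      = Real.sqrt (a ^ 2 + b ^ 2) / (1 + a) ∧
    1 < Real.sqrt (a ^ 2 + b ^ 2) / (1 + a) := by
  have h1a : 0 < 1 + a := by linarith
  have hsq := Matrix.fin_two_col_mul_self a b
  refine ⟨?_, ?_, ?_, ?_⟩
  · simpa [Set.pair_comm] using Matrix.spectrum_lowerTriangular_fin_two a b 0
  · exact IsUnit.of_mul_eq_one_right _
      (one_sub_smul_mul_one_add_of_mul_self_eq_smul hsq h1a.ne')
  · rw [Matrix.inv_one_add_mul_of_mul_self_eq_smul hsq h1a.ne', matOpNorm_smul,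
      matOpNorm_fin_two_col, abs_inv, abs_of_pos h1a, inv_mul_eq_div]
  · rw [one_lt_div h1a, Real.lt_sqrt h1a.le]
    linarith
end

section
/- Let N ∈ ℕ, r > 0, and let a₁, b₁, b₂ ∈ [0, 1) and Θ ∈ (0, 1], and set θ = max{Θ·a₁ + b₁, Θ + b₂}; assume θ < 1. Suppose (p_n)_{n≥0}, (q_n)_{n≥0}, (p̂_n)_{n≥1}, (q̂_n)_{n≥1} are sequences of nonnegative real numbers satisfying, for every n ≥ 1: q̂_n ≤ a₁·p_{n−1} + q_{n−1}, p̂_n ≤ b₁·p_{n−1} + b₂·q_{n−1}, q_n ≤ Θ·q̂_n + 2Nr², and p_n ≤ p̂_n + 2Nr². Then for every n ≥ 1, p_n + q_n ≤ θⁿ·(p₀ + q₀) + 4Nr²·(1 − θⁿ)/(1 − θ). -/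
/-!
Adding the two analysis bounds and inserting the prediction bounds gives
`p n + q n ≤ (Θ a₁ + b₁) p (n-1) + (Θ + b₂) q (n-1) + 4 N r²`, and since `p, q ≥ 0` both
coefficients may be replaced by their maximum `θ`. The total error therefore obeys the
scalar recursion `e n ≤ θ e (n-1) + 4 N r²`, which unrolls to the geometric bound.
-/

open Finset

theorem mul_add_mul_le_max_mul_add {α : Type*} [Semiring α] [LinearOrder α] [IsOrderedRing α]
    {a b x y : α} (hx : 0 ≤ x) (hy : 0 ≤ y) : a * x + b * y ≤ max a b * (x + y) := by
  rw [mul_add]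
  gcongr
  · exact le_max_left a b
  · exact le_max_right a b

theorem le_pow_mul_add_mul_geom_sum {α : Type*} [CommSemiring α] [PartialOrder α]
    [IsOrderedRing α] {u : ℕ → α} {θ c : α} (hθ : 0 ≤ θ) (hu : ∀ n, u (n + 1) ≤ θ * u n + c) :
    ∀ n, u n ≤ θ ^ n * u 0 + c * ∑ i ∈ range n, θ ^ i
  | 0 => by simp
  | n + 1 =>
    calc u (n + 1) ≤ θ * u n + c := hu n
      _ ≤ θ * (θ ^ n * u 0 + c * ∑ i ∈ range n, θ ^ i) + c := by
        gcongr
        exact le_pow_mul_add_mul_geom_sum hθ hu n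
      _ = θ ^ (n + 1) * u 0 + c * ∑ i ∈ range (n + 1), θ ^ i := by
        rw [geom_sum_succ]
        ring

theorem add_le_max_mul_add_of_prediction_analysis {Θ a₁ b₁ b₂ p q pf qf pa qa c : ℝ}
    (hΘ : 0 ≤ Θ) (hp : 0 ≤ p) (hq : 0 ≤ q)
    (hqf : qf ≤ a₁ * p + q) (hpf : pf ≤ b₁ * p + b₂ * q)
    (hqa : qa ≤ Θ * qf + c) (hpa : pa ≤ pf + c) :
    pa + qa ≤ max (Θ * a₁ + b₁) (Θ + b₂) * (p + q) + 2 * c :=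
  calc pa + qa ≤ (b₁ * p + b₂ * q) + Θ * (a₁ * p + q) + 2 * c := by
        have := mul_le_mul_of_nonneg_left hqf hΘ
        linarith
    _ = (Θ * a₁ + b₁) * p + (Θ + b₂) * q + 2 * c := by ring
    _ ≤ max (Θ * a₁ + b₁) (Θ + b₂) * (p + q) + 2 * c := by
        gcongr
        exact mul_add_mul_le_max_mul_add hp hq

theorem po_error_recursion_general (N : ℕ) (r : ℝ)
    (a1 b1 b2 : ℝ)
    (hb2 : 0 ≤ b2) (Θ : ℝ) (hΘ : 0 < Θ)
    (θ : ℝ) (hθdef : θ = max (Θ * a1 + b1) (Θ + b2)) (hθ : θ < 1)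
    (p q : ℕ → ℝ) (phat qhat : ℕ → ℝ)
    (hp : ∀ n, 0 ≤ p n) (hq : ∀ n, 0 ≤ q n)
    (hqhatrec : ∀ n, 1 ≤ n → qhat n ≤ a1 * p (n - 1) + q (n - 1))
    (hphatrec : ∀ n, 1 ≤ n → phat n ≤ b1 * p (n - 1) + b2 * q (n - 1))
    (hqrec : ∀ n, 1 ≤ n → q n ≤ Θ * qhat n + 2 * N * r ^ 2)
    (hprec : ∀ n, 1 ≤ n → p n ≤ phat n + 2 * N * r ^ 2) :
    ∀ n, 1 ≤ n →
      p n + q n ≤ θ ^ n * (p 0 + q 0) + 4 * N * r ^ 2 * (1 - θ ^ n) / (1 - θ) := by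
  have hθ₀ : 0 ≤ θ := hθdef ▸ le_max_of_le_right (by linarith)
  have hstep : ∀ n, p (n + 1) + q (n + 1) ≤ θ * (p n + q n) + 4 * N * r ^ 2 := fun n => by
    have := add_le_max_mul_add_of_prediction_analysis hΘ.le (hp n) (hq n)
      (hqhatrec (n + 1) n.succ_pos) (hphatrec (n + 1) n.succ_pos)
      (hqrec (n + 1) n.succ_pos) (hprec (n + 1) n.succ_pos)
    rw [← hθdef] at this
    linarith
  intro n _
  have h := le_pow_mul_add_mul_geom_sum (u := fun n => p n + q n) hθ₀ hstep n
  rwa [geom_sum_eq hθ.ne, ← mul_div_assoc, ← neg_div_neg_eq, ← mul_neg, neg_sub, neg_sub] at h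

theorem po_error_recursion (N : ℕ) (r : ℝ) (hr : 0 < r)
    (a1 b1 b2 : ℝ) (ha1 : 0 ≤ a1) (ha1' : a1 < 1) (hb1 : 0 ≤ b1) (hb1' : b1 < 1)
    (hb2 : 0 ≤ b2) (hb2' : b2 < 1) (Θ : ℝ) (hΘ : 0 < Θ) (hΘ' : Θ ≤ 1)
    (θ : ℝ) (hθdef : θ = max (Θ * a1 + b1) (Θ + b2)) (hθ : θ < 1)
    (p q : ℕ → ℝ) (phat qhat : ℕ → ℝ)
    (hp : ∀ n, 0 ≤ p n) (hq : ∀ n, 0 ≤ q n)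
    (hphat : ∀ n, 1 ≤ n → 0 ≤ phat n) (hqhat : ∀ n, 1 ≤ n → 0 ≤ qhat n)
    (hqhatrec : ∀ n, 1 ≤ n → qhat n ≤ a1 * p (n - 1) + q (n - 1))
    (hphatrec : ∀ n, 1 ≤ n → phat n ≤ b1 * p (n - 1) + b2 * q (n - 1))
    (hqrec : ∀ n, 1 ≤ n → q n ≤ Θ * qhat n + 2 * N * r ^ 2)
    (hprec : ∀ n, 1 ≤ n → p n ≤ phat n + 2 * N * r ^ 2) :
    ∀ n, 1 ≤ n →
      p n + q n ≤ θ ^ n * (p 0 + q 0) + 4 * N * r ^ 2 * (1 - θ ^ n) / (1 - θ) :=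
  po_error_recursion_general N r a1 b1 b2 hb2 Θ hΘ θ hθdef hθ p q phat qhat hp hq hqhatrec hphatrec
    hqrec hprec
end
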